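/- arXiv:math/0107177 — 3 statements merged into one kernel-verified Lean document; each statement's English description precedes it below -/
import Mathlib

section
/- Let Δ be an irreducible simply-laced root system with fundamental weights ω_i, simple roots α_i, and Coxeter number h. Define Δ̂(ω_i) = {α + mδ : α ∈ Δ⁻, 1 ≤ m ≤ −(ω_i,α)} (a finite multiset of affine roots, where δ is the imaginary root with (δ,α_i)=0) and γ_i = ∑_{β∈Δ̂(ω_i)} β. Then (γ_i, α_i) = −h. -/
/-!
The operator `T x = ∑_{α ∈ Δ} ⟪α, x⟫ α` is symmetric and commutes with every reflection `s_α`,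
so `T α_j` lies in the `-1`-eigenspace `ℝ α_j` of `s_j`. Symmetry forces equal eigenvalues on
non-orthogonal simple roots, hence by irreducibility `T = c • id`, and taking traces gives
`c · rank = ∑_{α ∈ Δ} ⟪α, α⟫ = 2 |Δ| = 2 h · rank`, i.e. `c = 2h`.
On `Δ⁻` the multiplicity `-⟪ω_i, α⟫` is a natural number and `⟪ω_i, α⟫ ⟪α, α_i⟫` is even in `α`,
so `(γ_i, α_i) = -∑_{α ∈ Δ⁻} ⟪ω_i, α⟫ ⟪α, α_i⟫ = -½ ⟪T ω_i, α_i⟫ = -h`.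
-/

open scoped InnerProductSpace Classical

structure RootSystemData (V : Type*) [NormedAddCommGroup V] [InnerProductSpace ℝ V]
    (I : Type*) [Fintype I] : Type _ where
  roots : Finset V
  simple : I → V
  simple_mem : ∀ i, simple i ∈ roots
  zero_notMem : (0 : V) ∉ roots
  neg_mem : ∀ α ∈ roots, -α ∈ roots
  reflect_mem : ∀ α ∈ roots, ∀ β ∈ roots, β - (2 * ⟪β, α⟫_ℝ / ⟪α, α⟫_ℝ) • α ∈ roots
  pairing_int : ∀ α ∈ roots, ∀ β ∈ roots, ∃ n : ℤ, 2 * ⟪β, α⟫_ℝ / ⟪α, α⟫_ℝ = (n : ℝ)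
  indep : LinearIndependent ℝ simple
  span_eq : Submodule.span ℝ (Set.range simple) = ⊤
  pos_or_neg : ∀ α ∈ roots,
    (∃ c : I → ℕ, α = ∑ i, (c i : ℝ) • simple i) ∨
    (∃ c : I → ℕ, α = -(∑ i, (c i : ℝ) • simple i))

namespace RootSystemData

variable {V : Type*} [NormedAddCommGroup V] [InnerProductSpace ℝ V]
  {I : Type*} [Fintype I]

noncomputable def posRoots (R : RootSystemData V I) : Finset V :=
  R.roots.filter fun α => ∃ c : I → ℕ, α = ∑ i, (c i : ℝ) • R.simple i

noncomputable def negRoots (R : RootSystemData V I) : Finset V :=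
  R.posRoots.image fun α => -α

def IsSimplyLaced (R : RootSystemData V I) : Prop :=
  ∀ α ∈ R.roots, ⟪α, α⟫_ℝ = 2

def IsIrreducible (R : RootSystemData V I) : Prop :=
  ∀ S : Set I, (∀ i ∈ S, ∀ j ∉ S, ⟪R.simple i, R.simple j⟫_ℝ = 0) → S = ∅ ∨ S = Set.univ

def HasCoxeterNumber (R : RootSystemData V I) (h : ℕ) : Prop :=
  R.roots.card = h * Fintype.card I

def IsFundamental (R : RootSystemData V I) (fw : I → V) : Prop :=
  ∀ i j, ⟪fw i, R.simple j⟫_ℝ = if i = j then 1 else 0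

noncomputable def refl [FiniteDimensional ℝ V] (R : RootSystemData V I) (i : I) :
    V ≃ₗᵢ[ℝ] V :=
  Submodule.reflection (ℝ ∙ R.simple i)ᗮ

noncomputable def weylGroup [FiniteDimensional ℝ V] (R : RootSystemData V I) :
    Subgroup (V ≃ₗᵢ[ℝ] V) :=
  Subgroup.closure (Set.range R.refl)

noncomputable def inversions [FiniteDimensional ℝ V] (R : RootSystemData V I)
    (w : V ≃ₗᵢ[ℝ] V) : Finset V :=
  R.posRoots.filter fun α => w α ∈ R.negRoots

end RootSystemData

theorem reflection_orthogonalComplement_singleton_apply {V : Type*} [NormedAddCommGroup V]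
    [InnerProductSpace ℝ V] (β x : V) :
    (ℝ ∙ β)ᗮ.reflection x = x - (2 * ⟪x, β⟫_ℝ / ⟪β, β⟫_ℝ) • β := by
  rw [Submodule.reflection_orthogonal_apply, Submodule.reflection_singleton_apply,
    RCLike.ofReal_real_eq_id, id, ← real_inner_self_eq_norm_sq, real_inner_comm]
  module

namespace RootSystemData

variable {V : Type*} [NormedAddCommGroup V] [InnerProductSpace ℝ V]
  {I : Type*} [Fintype I] (R : RootSystemData V I)

noncomputable def simpleBasis : Module.Basis I ℝ V :=
  .mk R.indep R.span_eq.ge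

theorem finiteDimensional (R : RootSystemData V I) : FiniteDimensional ℝ V :=
  .of_basis R.simpleBasis

theorem finrank_eq_card (R : RootSystemData V I) : Module.finrank ℝ V = Fintype.card I :=
  Module.finrank_eq_card_basis R.simpleBasis

theorem reflection_mem_roots {α β : V} (hβ : β ∈ R.roots) (hα : α ∈ R.roots) :
    (ℝ ∙ β)ᗮ.reflection α ∈ R.roots := by
  rw [reflection_orthogonalComplement_singleton_apply]
  exact R.reflect_mem β hβ α hα

noncomputable def polarization : V →ₗ[ℝ] V :=
  ∑ α ∈ R.roots, (innerₛₗ ℝ α).smulRight α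

theorem polarization_apply (x : V) :
    R.polarization x = ∑ α ∈ R.roots, ⟪α, x⟫_ℝ • α := by
  simp [polarization]

theorem trace_polarization [FiniteDimensional ℝ V] :
    LinearMap.trace ℝ V R.polarization = ∑ α ∈ R.roots, ⟪α, α⟫_ℝ := by
  simp [polarization, map_sum]

theorem inner_polarization_left (x y : V) :
    ⟪R.polarization x, y⟫_ℝ = ∑ α ∈ R.roots, ⟪α, x⟫_ℝ * ⟪α, y⟫_ℝ := by
  simp [polarization_apply, sum_inner, real_inner_smul_left]

theorem isSymmetric_polarization : R.polarization.IsSymmetric := by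
  intro x y
  rw [inner_polarization_left, ← real_inner_comm, inner_polarization_left]
  exact Finset.sum_congr rfl fun α _ => mul_comm _ _

theorem polarization_reflection {β : V} (hβ : β ∈ R.roots) (x : V) :
    R.polarization ((ℝ ∙ β)ᗮ.reflection x) = (ℝ ∙ β)ᗮ.reflection (R.polarization x) := by
  rw [polarization_apply, polarization_apply, map_sum]
  refine Finset.sum_nbij' (ℝ ∙ β)ᗮ.reflection (ℝ ∙ β)ᗮ.reflection
    (fun α hα => R.reflection_mem_roots hβ hα) (fun α hα => R.reflection_mem_roots hβ hα)
    (fun α _ => Submodule.reflection_reflection _ α)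
    (fun α _ => Submodule.reflection_reflection _ α) fun α _ => ?_
  rw [map_smul, Submodule.reflection_reflection,
    ← LinearIsometryEquiv.inner_map_map (ℝ ∙ β)ᗮ.reflection, Submodule.reflection_reflection]

theorem exists_polarization_simple_eq_smul (j : I) :
    ∃ c : ℝ, R.polarization (R.simple j) = c • R.simple j := by
  have hneg : (ℝ ∙ R.simple j)ᗮ.reflection (R.polarization (R.simple j)) =
      -R.polarization (R.simple j) := by
    rw [← R.polarization_reflection (R.simple_mem j),
      Submodule.reflection_orthogonalComplement_singleton_eq_neg, map_neg]
  have hmem : R.polarization (R.simple j) ∈ ℝ ∙ R.simple j := by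
    rw [← Submodule.reflection_eq_self_iff, ← neg_inj, ← Submodule.reflection_orthogonal_apply,
      hneg]
  obtain ⟨c, hc⟩ := Submodule.mem_span_singleton.1 hmem
  exact ⟨c, hc.symm⟩

theorem exists_polarization_eq_smul_id (hirr : R.IsIrreducible) :
    ∃ c : ℝ, R.polarization = c • LinearMap.id := by
  choose c hc using R.exists_polarization_simple_eq_smul
  have hlinked : ∀ j k, ⟪R.simple j, R.simple k⟫_ℝ ≠ 0 → c j = c k := by
    intro j k hjk
    have hsymm := R.isSymmetric_polarization (R.simple j) (R.simple k)
    rw [hc, hc, real_inner_smul_left, real_inner_smul_right] at hsymm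
    exact mul_right_cancel₀ hjk hsymm
  obtain hI | ⟨⟨i⟩⟩ := isEmpty_or_nonempty I
  · exact ⟨0, LinearMap.ext_on_range R.span_eq isEmptyElim⟩
  refine ⟨c i, LinearMap.ext_on_range R.span_eq fun j => ?_⟩
  have hi : i ∈ {k | c k = c i} := rfl
  have hj : j ∈ {k | c k = c i} := by
    rcases hirr {k | c k = c i} fun a ha b hb =>
        by_contra fun hab => hb ((hlinked a b hab).symm.trans ha) with hS | hS
    · exact absurd hi (hS ▸ Set.notMem_empty i)
    · exact Set.eq_univ_iff_forall.1 hS j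
  rw [hc, hj, LinearMap.smul_apply, LinearMap.id_apply]

theorem polarization_eq_smul_id [Nonempty I] (hSL : R.IsSimplyLaced) (hirr : R.IsIrreducible)
    {h : ℕ} (hcox : R.HasCoxeterNumber h) :
    R.polarization = (2 * h : ℝ) • LinearMap.id := by
  have := R.finiteDimensional
  obtain ⟨c, hc⟩ := R.exists_polarization_eq_smul_id hirr
  have htrace := R.trace_polarization
  rw [hc, map_smul, LinearMap.trace_id, R.finrank_eq_card, Finset.sum_congr rfl hSL,
    Finset.sum_const, hcox, smul_eq_mul, nsmul_eq_mul] at htrace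
  have hn : (Fintype.card I : ℝ) ≠ 0 := Nat.cast_ne_zero.2 Fintype.card_ne_zero
  rw [hc, mul_right_cancel₀ hn (by push_cast at htrace; linarith : c * _ = 2 * h * _)]

theorem mem_posRoots {α : V} :
    α ∈ R.posRoots ↔ α ∈ R.roots ∧ ∃ c : I → ℕ, α = ∑ i, (c i : ℝ) • R.simple i :=
  Finset.mem_filter

theorem disjoint_posRoots_negRoots : Disjoint R.posRoots R.negRoots := by
  rw [Finset.disjoint_left]
  intro α hα hα'
  obtain ⟨hαΔ, c, rfl⟩ := R.mem_posRoots.1 hα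
  obtain ⟨β, hβ, hβα⟩ := Finset.mem_image.1 hα'
  obtain ⟨-, d, rfl⟩ := R.mem_posRoots.1 hβ
  have hsum : ∑ i, ((c i + d i : ℕ) : ℝ) • R.simple i = 0 := by
    simp only [Nat.cast_add, add_smul, Finset.sum_add_distrib, ← hβα, neg_add_cancel]
  have hc : ∀ i, c i = 0 := fun i => by
    have := Fintype.linearIndependent_iff.1 R.indep _ hsum i
    exact_mod_cast Nat.eq_zero_of_add_eq_zero_right (by exact_mod_cast this)
  apply R.zero_notMem
  simpa [hc] using hαΔ

theorem posRoots_union_negRoots : R.posRoots ∪ R.negRoots = R.roots := by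
  ext α
  simp only [Finset.mem_union, negRoots, Finset.mem_image, mem_posRoots]
  constructor
  · rintro (⟨hα, -⟩ | ⟨β, ⟨hβ, -⟩, rfl⟩)
    · exact hα
    · exact R.neg_mem β hβ
  · intro hα
    rcases R.pos_or_neg α hα with hpos | ⟨c, hc⟩
    · exact Or.inl ⟨hα, hpos⟩
    · exact Or.inr ⟨-α, ⟨R.neg_mem α hα, c, by rw [hc, neg_neg]⟩, neg_neg α⟩

theorem sum_roots_eq_two_nsmul_sum_negRoots {M : Type*} [AddCommMonoid M] (f : V → M)
    (hf : ∀ α, f (-α) = f α) :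
    ∑ α ∈ R.roots, f α = 2 • ∑ α ∈ R.negRoots, f α := by
  have hneg : ∑ α ∈ R.negRoots, f α = ∑ α ∈ R.posRoots, f α := by
    rw [negRoots, Finset.sum_image fun a _ b _ hab => neg_injective hab]
    exact Finset.sum_congr rfl fun α _ => hf α
  rw [← R.posRoots_union_negRoots, Finset.sum_union R.disjoint_posRoots_negRoots, two_nsmul,
    hneg]

theorem inner_fundamental_sum_smul_simple {fw : I → V} (hfw : R.IsFundamental fw)
    (c : I → ℝ) (i : I) : ⟪fw i, ∑ j, c j • R.simple j⟫_ℝ = c i := by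
  simp [inner_sum, real_inner_smul_right, hfw i]

theorem natCast_floor_neg_inner_of_mem_negRoots {fw : I → V} (hfw : R.IsFundamental fw)
    {α : V} (hα : α ∈ R.negRoots) (i : I) :
    (⌊-⟪fw i, α⟫_ℝ⌋₊ : ℝ) = -⟪fw i, α⟫_ℝ := by
  obtain ⟨β, hβ, rfl⟩ := Finset.mem_image.1 hα
  obtain ⟨-, c, rfl⟩ := R.mem_posRoots.1 hβ
  rw [inner_neg_right, neg_neg, R.inner_fundamental_sum_smul_simple hfw (fun j => (c j : ℝ)),
    Nat.floor_natCast]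

end RootSystemData

/-- with `Δ̂(ω_i) = {α + mδ : α ∈ Δ⁻, 1 ≤ m ≤ −(ω_i,α)}` (affine roots modeled as
pairs `(α, m) ∈ V × ℤ` with `δ = (0,1)`, the pairing extended by `(δ, α_i) = 0`, i.e. pairing of
`(α,n)` with `(β,m)` is `(α,β)`), and `γ_i = ∑_{β ∈ Δ̂(ω_i)} β`, one has `(γ_i, α_i) = −h`. -/
theorem stmt2 {V : Type*} [NormedAddCommGroup V] [InnerProductSpace ℝ V]
    {I : Type*} [Fintype I] (R : RootSystemData V I)
    (hSL : R.IsSimplyLaced) (hirr : R.IsIrreducible)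
    (h : ℕ) (hcox : R.HasCoxeterNumber h)
    (fw : I → V) (hfw : R.IsFundamental fw) (i : I) :
    (fun x y : V × ℤ => ⟪x.1, y.1⟫_ℝ)
      (∑ α ∈ R.negRoots, ∑ m ∈ Finset.Icc 1 (⌊-(⟪fw i, α⟫_ℝ)⌋₊), ((α, (m : ℤ)) : V × ℤ))
      ((R.simple i, 0) : V × ℤ)
    = -(h : ℝ) := by
  have : Nonempty I := ⟨i⟩
  have hγ : (∑ α ∈ R.negRoots, ∑ m ∈ Finset.Icc 1 ⌊-⟪fw i, α⟫_ℝ⌋₊, ((α, (m : ℤ)) : V × ℤ)).1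
      = -∑ α ∈ R.negRoots, ⟪fw i, α⟫_ℝ • α := by
    simp only [Prod.fst_sum, Finset.sum_const, Nat.card_Icc, add_tsub_cancel_right,
      ← Finset.sum_neg_distrib, ← neg_smul]
    refine Finset.sum_congr rfl fun α hα => ?_
    rw [← Nat.cast_smul_eq_nsmul ℝ, R.natCast_floor_neg_inner_of_mem_negRoots hfw hα]
  have hT : ⟪R.polarization (fw i), R.simple i⟫_ℝ = 2 * h := by
    rw [R.polarization_eq_smul_id hSL hirr hcox, LinearMap.smul_apply, LinearMap.id_apply,
      real_inner_smul_left, hfw, if_pos rfl, mul_one]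
  rw [R.inner_polarization_left, R.sum_roots_eq_two_nsmul_sum_negRoots _ fun α => by
    simp only [inner_neg_left]; ring, two_nsmul] at hT
  beta_reduce
  rw [hγ, inner_neg_left, sum_inner]
  simp only [real_inner_smul_left, real_inner_comm (fw i)] at hT ⊢
  linarith
end

section
/- Let A = ℤ[q,q⁻¹] and let W be a free A-module with a finite (or arbitrary) basis B. Let β : W → W be an additive involution satisfying β(q^n x) = q^{−n} β(x) and β(b) = b for every b ∈ B. Let (·|·) : W × W → A be a symmetric A-bilinear pairing such that (b|b') ∈ δ_{b,b'} + q⁻¹ℤ[q⁻¹] for all b, b' ∈ B. Then the set {x ∈ W : β(x) = x and (x|x) ∈ 1 + q⁻¹ℤ[q⁻¹]} equals {±b : b ∈ B}. -/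
open LaurentPolynomial

/-! Write `x = ∑ pᵢ bᵢ`. As `β` is semilinear for the bar involution and fixes the basis, `β x = x`
makes every `pᵢ` bar-invariant, so the top degree `n` occurring among the `pᵢ` is `≥ 0`. Modulo
`q⁻¹ℤ[q⁻¹]`, the pairing is the identity matrix, so the coefficient of `(x|x)` in degree `2n` is
`∑ᵢ (coeff n pᵢ)²`; comparing with `1 + q⁻¹ℤ[q⁻¹]` forces `n = 0` and this sum of squares to be `1`.
Bar-invariant Laurent polynomials of degree `≤ 0` are constants, so `x = ±bᵢ`. -/

/-- The ℤ-submodule `q⁻¹ℤ[q⁻¹]` of `ℤ[q,q⁻¹]`: Laurent polynomials supported in degrees ≤ −1. -/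
noncomputable def lowQ : Submodule ℤ (LaurentPolynomial ℤ) :=
  Submodule.span ℤ {p : LaurentPolynomial ℤ | ∃ n : ℤ, n ≤ -1 ∧ p = LaurentPolynomial.T n}

namespace LaurentPolynomial

section Semiring

variable {R : Type*} [Semiring R] {f g : R[T;T⁻¹]} {a c m : ℤ}

theorem le_of_mem_support_of_forall_coeff_eq_zero (hf : ∀ m, a < m → f.coeff m = 0)
    (hm : m ∈ f.coeff.support) : m ≤ a :=
  not_lt.1 fun h => Finsupp.mem_support_iff.1 hm (hf m h)

theorem coeff_mul_eq_zero_of_lt (hf : ∀ m, a < m → f.coeff m = 0)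
    (hg : ∀ m, c < m → g.coeff m = 0) (hm : a + c < m) : (f * g).coeff m = 0 := by
  classical
  by_contra h
  obtain ⟨u, hu, v, hv, rfl⟩ :=
    Finset.mem_add.1 (AddMonoidAlgebra.support_coeff_mul_subset f g (Finsupp.mem_support_iff.2 h))
  have hua := le_of_mem_support_of_forall_coeff_eq_zero hf hu
  have hvc := le_of_mem_support_of_forall_coeff_eq_zero hg hv
  omega

theorem coeff_mul_add_of_forall_coeff_eq_zero (hf : ∀ m, a < m → f.coeff m = 0)
    (hg : ∀ m, c < m → g.coeff m = 0) : (f * g).coeff (a + c) = f.coeff a * g.coeff c :=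
  AddMonoidAlgebra.coeff_mul_add_of_uniqueAdd fun u v hu hv huv => by
    have hua := le_of_mem_support_of_forall_coeff_eq_zero hf hu
    have hvc := le_of_mem_support_of_forall_coeff_eq_zero hg hv
    omega

theorem exists_coeff_ne_zero_forall_coeff_eq_zero {ι : Type*} {p : ι →₀ R[T;T⁻¹]} (hp : p ≠ 0) :
    ∃ n, (∃ i, (p i).coeff n ≠ 0) ∧ ∀ i m, n < m → (p i).coeff m = 0 := by
  classical
  set S := p.support.biUnion fun i => (p i).coeff.support
  have hS : S.Nonempty := by
    obtain ⟨i, hi⟩ := Finsupp.support_nonempty_iff.2 hp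
    obtain ⟨m, hm⟩ := Finsupp.support_nonempty_iff.2 fun h =>
      Finsupp.mem_support_iff.1 hi (AddMonoidAlgebra.coeff_eq_zero.1 h)
    exact ⟨m, Finset.mem_biUnion.2 ⟨i, hi, hm⟩⟩
  obtain ⟨i, -, hi⟩ := Finset.mem_biUnion.1 (S.max'_mem hS)
  refine ⟨S.max' hS, ⟨i, Finsupp.mem_support_iff.1 hi⟩, fun j m hm => ?_⟩
  by_contra h
  have hj : j ∈ p.support := Finsupp.mem_support_iff.2 fun hj => h (by simp [hj])
  exact hm.not_ge (S.le_max' m (Finset.mem_biUnion.2 ⟨j, hj, Finsupp.mem_support_iff.2 h⟩))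

end Semiring

theorem eq_C_of_invert_eq {R : Type*} [CommSemiring R] {f : R[T;T⁻¹]} (hf : invert f = f)
    (hpos : ∀ m, 0 < m → f.coeff m = 0) : f = C (f.coeff 0) := by
  ext m
  rcases lt_trichotomy m 0 with h | rfl | h
  · rw [← hf, invert_apply, hpos _ (by omega), C_apply, if_neg h.ne]
  · simp
  · rw [hpos m h, C_apply, if_neg h.ne']

theorem coeff_eq_zero_of_mem_lowQ {r : ℤ[T;T⁻¹]} (hr : r ∈ lowQ) {m : ℤ} (hm : 0 ≤ m) :
    r.coeff m = 0 := by
  induction hr using Submodule.span_induction with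
  | mem p hp => obtain ⟨n, hn, rfl⟩ := hp; rw [T_apply, if_neg (by omega)]
  | zero => simp
  | add p q _ _ hp hq => simp [hp, hq]
  | smul c p _ hp => rw [AddMonoidAlgebra.coeff_smul, Finsupp.smul_apply, hp, smul_zero]

end LaurentPolynomial

theorem Finset.exists_mul_self_eq_one_of_sum_mul_self_eq_one {ι : Type*} {s : Finset ι}
    {c : ι → ℤ} (h : ∑ i ∈ s, c i * c i = 1) :
    ∃ i ∈ s, c i * c i = 1 ∧ ∀ j ∈ s, j ≠ i → c j = 0 := by
  classical
  obtain ⟨i, hi, hci⟩ : ∃ i ∈ s, c i ≠ 0 := by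
    by_contra! h0
    rw [(Finset.sum_mul_self_eq_zero_iff _ _).2 h0] at h
    exact zero_ne_one h
  rw [← Finset.add_sum_erase s _ hi] at h
  have hpos := mul_self_pos.2 hci
  have hrest := Finset.sum_nonneg fun j (_ : j ∈ s.erase i) => mul_self_nonneg (c j)
  have hrest0 : ∑ j ∈ s.erase i, c j * c j = 0 := by linarith
  exact ⟨i, hi, by linarith, fun j hj hji =>
    (Finset.sum_mul_self_eq_zero_iff _ _).1 hrest0 j (Finset.mem_erase.2 ⟨hji, hj⟩)⟩

namespace LaurentPolynomial

variable {ι : Type*} [DecidableEq ι]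

theorem coeff_sum_sum_mul_mul_of_forall_coeff_eq_zero (s : Finset ι) (p : ι → ℤ[T;T⁻¹])
    {G : ι → ι → ℤ[T;T⁻¹]} (hG : ∀ i j, G i j - (if i = j then 1 else 0) ∈ lowQ) {n : ℤ}
    (hp : ∀ i m, n < m → (p i).coeff m = 0) :
    (∑ i ∈ s, ∑ j ∈ s, p i * (p j * G i j)).coeff (n + n) =
      ∑ i ∈ s, (p i).coeff n * (p i).coeff n := by
  have hterm : ∀ i j, (p i * (p j * G i j)).coeff (n + n) =
      if i = j then (p i).coeff n * (p i).coeff n else 0 := by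
    intro i j
    have herr : (p i * p j * (G i j - if i = j then 1 else 0)).coeff (n + n) = 0 :=
      coeff_mul_eq_zero_of_lt (c := -1) (fun m hm => coeff_mul_eq_zero_of_lt (hp i) (hp j) hm)
        (fun m hm => coeff_eq_zero_of_mem_lowQ (hG i j) (by omega)) (by omega)
    rw [show p i * (p j * G i j) = p i * p j * (if i = j then 1 else 0) +
      p i * p j * (G i j - if i = j then 1 else 0) by ring, AddMonoidAlgebra.coeff_add,
      Finsupp.add_apply, herr, add_zero]
    split_ifs with h
    · rw [h, mul_one, coeff_mul_add_of_forall_coeff_eq_zero (hp j) (hp j)]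
    · rw [mul_zero, AddMonoidAlgebra.coeff_zero, Finsupp.zero_apply]
  simp only [AddMonoidAlgebra.coeff_sum, Finsupp.finsetSum_apply, hterm, Finset.sum_ite_eq,
    Finset.sum_ite_mem, Finset.inter_self]

theorem exists_eq_single_of_invert_eq_of_sub_one_mem_lowQ {p : ι →₀ ℤ[T;T⁻¹]}
    {G : ι → ι → ℤ[T;T⁻¹]} (hG : ∀ i j, G i j - (if i = j then 1 else 0) ∈ lowQ)
    (hp : ∀ i, invert (p i) = p i)
    (hQ : (∑ i ∈ p.support, ∑ j ∈ p.support, p i * (p j * G i j)) - 1 ∈ lowQ) :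
    ∃ i, p = Finsupp.single i 1 ∨ p = Finsupp.single i (-1) := by
  have hp0 : p ≠ 0 := by
    rintro rfl
    simpa using coeff_eq_zero_of_mem_lowQ hQ le_rfl
  obtain ⟨n, ⟨i₁, hi₁⟩, htop⟩ := exists_coeff_ne_zero_forall_coeff_eq_zero hp0
  have hn : 0 ≤ n := by
    by_contra! hn
    exact hi₁ (by rw [← hp, invert_apply]; exact htop i₁ (-n) (by omega))
  have hQn := coeff_eq_zero_of_mem_lowQ hQ (by omega : 0 ≤ n + n)
  rw [AddMonoidAlgebra.coeff_sub, Finsupp.sub_apply,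
    coeff_sum_sum_mul_mul_of_forall_coeff_eq_zero p.support p hG htop, ← T_zero, T_apply,
    sub_eq_zero] at hQn
  obtain rfl : n = 0 := by
    by_contra hn0
    rw [if_neg (by omega), Finset.sum_mul_self_eq_zero_iff] at hQn
    exact hi₁ (hQn i₁ (Finsupp.mem_support_iff.2 fun h => hi₁ (by simp [h])))
  rw [if_pos (add_zero 0).symm] at hQn
  obtain ⟨i, -, hsq, hzero⟩ := Finset.exists_mul_self_eq_one_of_sum_mul_self_eq_one hQn
  have hC : ∀ j, p j = C ((p j).coeff 0) := fun j => eq_C_of_invert_eq (hp j) (htop j)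
  have hsingle : p = Finsupp.single i (C ((p i).coeff 0)) := by
    refine Finsupp.ext fun j => ?_
    by_cases hji : j = i
    · rw [hji, Finsupp.single_eq_same, ← hC]
    · rw [Finsupp.single_eq_of_ne hji]
      by_contra hj
      exact hj (by rw [hC j, hzero j (Finsupp.mem_support_iff.2 hj) hji, map_zero])
  refine ⟨i, ?_⟩
  rcases mul_self_eq_one_iff.1 hsq with h | h
  · exact Or.inl (by rw [hsingle, h, map_one])
  · exact Or.inr (by rw [hsingle, h, map_neg, map_one])

end LaurentPolynomial

section Module

variable {W : Type*} [AddCommGroup W] [Module ℤ[T;T⁻¹] W] (β : W →+ W)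

theorem LaurentPolynomial.map_smul_eq_invert_smul
    (hsemi : ∀ (n : ℤ) (x : W), β ((T n : ℤ[T;T⁻¹]) • x) = (T (-n) : ℤ[T;T⁻¹]) • β x)
    (f : ℤ[T;T⁻¹]) (w : W) : β (f • w) = invert f • β w := by
  induction f using LaurentPolynomial.induction_on' with
  | add f g hf hg => rw [add_smul, map_add, hf, hg, map_add, add_smul]
  | C_mul_T n a =>
    rw [mul_smul, map_mul, invert_C, invert_T, mul_smul, eq_intCast C a, Int.cast_smul_eq_zsmul,
      Int.cast_smul_eq_zsmul, map_zsmul, hsemi]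

theorem Module.Basis.invert_repr_eq_of_map_eq {ι : Type*} (b : Basis ι ℤ[T;T⁻¹] W)
    (hsmul : ∀ (f : ℤ[T;T⁻¹]) (w : W), β (f • w) = invert f • β w) (hb : ∀ i, β (b i) = b i)
    {x : W} (hx : β x = x) (i : ι) : invert (b.repr x i) = b.repr x i := by
  have hβx : β x = Finsupp.linearCombination _ b ((b.repr x).mapRange invert (map_zero _)) := by
    conv_lhs => rw [← b.linearCombination_repr x]
    rw [Finsupp.linearCombination_apply, Finsupp.linearCombination_apply,
      Finsupp.sum_mapRange_index fun _ => zero_smul _ (b _), map_finsuppSum]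
    simp only [hsmul, hb]
  rw [hx] at hβx
  simpa using congrArg (fun y => b.repr y i) hβx.symm

end Module

theorem stmt6_general {ι W : Type*} [DecidableEq ι] [AddCommGroup W] [Module (LaurentPolynomial ℤ) W]
    (b : Module.Basis ι (LaurentPolynomial ℤ) W) (β : W → W)
    (hadd : ∀ x y, β (x + y) = β x + β y)
    (hsemi : ∀ (n : ℤ) (x : W), β ((LaurentPolynomial.T n : LaurentPolynomial ℤ) • x) = (LaurentPolynomial.T (-n) : LaurentPolynomial ℤ) • β x)
    (hb : ∀ i, β (b i) = b i)
    (P : W →ₗ[LaurentPolynomial ℤ] W →ₗ[LaurentPolynomial ℤ] LaurentPolynomial ℤ)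
    (hPb : ∀ i j, P (b i) (b j) - (if i = j then 1 else 0) ∈ lowQ) :
    {x : W | β x = x ∧ P x x - 1 ∈ lowQ} = {x : W | ∃ i, x = b i ∨ x = -(b i)} := by
  let β' : W →+ W := AddMonoidHom.mk' β hadd
  have hsmul := map_smul_eq_invert_smul β' hsemi
  ext x
  constructor
  · rintro ⟨hx, hPx⟩
    rw [← LinearMap.sum_repr_mul_repr_mul b b (B := P) x x] at hPx
    simp only [Finsupp.sum, smul_eq_mul] at hPx
    obtain ⟨i, h | h⟩ := exists_eq_single_of_invert_eq_of_sub_one_mem_lowQ hPb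
      (b.invert_repr_eq_of_map_eq β' hsmul hb hx) hPx
    · exact ⟨i, Or.inl (b.repr.injective (by rw [h, b.repr_self]))⟩
    · exact ⟨i, Or.inr (b.repr.injective (by rw [h, map_neg, b.repr_self, Finsupp.single_neg]))⟩
  · rintro ⟨i, rfl | rfl⟩
    · exact ⟨hb i, by simpa using hPb i i⟩
    · exact ⟨(map_neg β' (b i)).trans (congrArg Neg.neg (hb i)), by simpa using hPb i i⟩

/-- let `W` be a free `A = ℤ[q,q⁻¹]`-module with basis `B`, `β` an additive
involution with `β(qⁿx) = q⁻ⁿ β(x)` fixing the basis, and `(·|·)` a symmetric bilinear pairing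
with `(b|b') ∈ δ_{b,b'} + q⁻¹ℤ[q⁻¹]`. Then
`{x : β(x) = x, (x|x) ∈ 1 + q⁻¹ℤ[q⁻¹]} = {±b : b ∈ B}`. -/
theorem stmt6 {ι W : Type*} [DecidableEq ι] [AddCommGroup W] [Module (LaurentPolynomial ℤ) W]
    (b : Module.Basis ι (LaurentPolynomial ℤ) W) (β : W → W)
    (hadd : ∀ x y, β (x + y) = β x + β y)
    (hinv : ∀ x, β (β x) = x)
    (hsemi : ∀ (n : ℤ) (x : W), β ((LaurentPolynomial.T n : LaurentPolynomial ℤ) • x) = (LaurentPolynomial.T (-n) : LaurentPolynomial ℤ) • β x)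
    (hb : ∀ i, β (b i) = b i)
    (P : W →ₗ[LaurentPolynomial ℤ] W →ₗ[LaurentPolynomial ℤ] LaurentPolynomial ℤ)
    (hsymm : ∀ x y, P x y = P y x)
    (hPb : ∀ i j, P (b i) (b j) - (if i = j then 1 else 0) ∈ lowQ) :
    {x : W | β x = x ∧ P x x - 1 ∈ lowQ} = {x : W | ∃ i, x = b i ∨ x = -(b i)} :=
  stmt6_general b β hadd hsemi hb P hPb
end

section
/- Let Δ be a simply-laced root system with Coxeter number h, Weyl group longest element w₀, fundamental weights ω_i, and fix a dominant weight λ; set ν = λ − w₀(λ) and write ν = ∑_j k_j α_j. For α in the root lattice Q define |α|² = ∑_j (ω_j,α)² and x(α) = (h−1)|α|² + (1 − h/2)(α,α) + (h−2)(λ,α) + (1−h)∑_j k_j (ω_j,α) + C for any constant C. Then x(w₀*α) = x(α) for all α ∈ Q, where w₀*α = ν + w₀(α). -/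
open scoped InnerProductSpace Classical

/-!
Write `ν = λ - w₀λ`, so that `w₀ν = -ν`. For any symmetric `w₀`-invariant bilinear form `Q`, the
function `β ↦ Q(β, β - ν)` is invariant under `β ↦ ν + w₀β`:
`Q(ν + w₀α, w₀α) = Q(ν, w₀α) + Q(α, α) = Q(α, α) - Q(ν, α)`. Both the Euclidean form and
`B(u, v) = ∑ⱼ (ωⱼ, u)(ωⱼ, v)` are such forms (`w₀` permutes the `-ωⱼ`), and
`x(β) = (h-1) B(β, β-ν) + (1-h/2) ((β, β-ν) - (λ + w₀λ, β)) + C`. The last linear term is invariant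
too, since `λ + w₀λ` is fixed by `w₀` and orthogonal to `ν`.
-/

namespace LinearMap.BilinForm

variable {R M : Type*} [CommRing R] [AddCommGroup M] [Module R M]

theorem apply_sub_eq_of_map_eq_neg {Q : LinearMap.BilinForm R M} (hQ : Q.IsSymm)
    {F : Type*} [FunLike F M M] [LinearMapClass F R M M] {w : F}
    (hQw : ∀ u v, Q (w u) (w v) = Q u v) {ν : M} (hν : w ν = -ν) (α : M) :
    Q (ν + w α) (ν + w α - ν) = Q α (α - ν) := by
  have hcross : Q ν (w α) = -Q α ν := by
    have := hQw ν α
    rw [hν, map_neg, LinearMap.neg_apply] at this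
    rw [hQ.eq α ν, ← this, neg_neg]
  rw [add_sub_cancel_left, map_add, LinearMap.add_apply, hQw, hcross, map_sub]
  abel

variable {I : Type*} [Fintype I]

noncomputable def sumSq (f : I → M →ₗ[R] R) : LinearMap.BilinForm R M :=
  ∑ j, linMulLin (f j) (f j)

theorem sumSq_apply (f : I → M →ₗ[R] R) (u v : M) : sumSq f u v = ∑ j, f j u * f j v := by
  simp [sumSq, LinearMap.sum_apply, linMulLin_apply]

theorem isSymm_sumSq (f : I → M →ₗ[R] R) : (sumSq f).IsSymm :=
  ⟨fun u v => by simp only [sumSq_apply, mul_comm]⟩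

theorem sumSq_map_map {f : I → M →ₗ[R] R} {F : Type*} [FunLike F M M] {w : F}
    (e : Equiv.Perm I) (hf : ∀ j v, f j (w v) = -f (e j) v) (u v : M) :
    sumSq f (w u) (w v) = sumSq f u v := by
  simp only [sumSq_apply, hf, neg_mul_neg]
  exact Equiv.sum_comp e fun j => f j u * f j v

end LinearMap.BilinForm

theorem isSymm_innerₗ {V : Type*} [NormedAddCommGroup V] [InnerProductSpace ℝ V] :
    LinearMap.BilinForm.IsSymm (innerₗ V) :=
  ⟨fun u v => real_inner_comm v u⟩

theorem real_inner_sub_sub_inner_add {V : Type*} [NormedAddCommGroup V] [InnerProductSpace ℝ V]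
    (u v β : V) : ⟪β, β - (u - v)⟫_ℝ - ⟪u + v, β⟫_ℝ = ⟪β, β⟫_ℝ - 2 * ⟪u, β⟫_ℝ := by
  rw [inner_sub_right, inner_sub_right, inner_add_left, real_inner_comm u β, real_inner_comm v β]
  ring

namespace LinearIsometryEquiv

variable {V : Type*} [NormedAddCommGroup V] [InnerProductSpace ℝ V] {w : V ≃ₗᵢ[ℝ] V}

theorem inner_map_left_of_involutive (hw : ∀ v, w (w v) = v) (u v : V) :
    ⟪w u, v⟫_ℝ = ⟪u, w v⟫_ℝ := by
  rw [← w.inner_map_map, hw]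

theorem map_sub_map_self_of_involutive (hw : ∀ v, w (w v) = v) (u : V) :
    w (u - w u) = -(u - w u) := by
  rw [map_sub, hw, neg_sub]

theorem inner_add_map_sub_eq_of_map_eq_neg {ν : V} (hν : w ν = -ν) (α : V) :
    ⟪ν + w α, ν + w α - ν⟫_ℝ = ⟪α, α - ν⟫_ℝ :=
  LinearMap.BilinForm.apply_sub_eq_of_map_eq_neg isSymm_innerₗ w.inner_map_map hν α

theorem inner_add_map_self_sub_add_map (hw : ∀ v, w (w v) = v) (u α : V) :
    ⟪u + w u, u - w u + w α⟫_ℝ = ⟪u + w u, α⟫_ℝ := by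
  have hfixed : w (u + w u) = u + w u := by rw [map_add, hw, add_comm]
  have horth : ⟪u + w u, u - w u⟫_ℝ = 0 := by
    rw [inner_add_left, inner_sub_right, inner_sub_right, w.inner_map_map, real_inner_comm u (w u)]
    ring
  rw [inner_add_right, horth, zero_add, ← inner_map_left_of_involutive hw, hfixed]

end LinearIsometryEquiv

namespace RootSystemData

variable {V : Type*} [NormedAddCommGroup V] [InnerProductSpace ℝ V]
  {I : Type*} [Fintype I] {R : RootSystemData V I} {fw : I → V}

theorem IsFundamental.injective (hfw : R.IsFundamental fw) : Function.Injective fw := by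
  intro i j hij
  have := hfw i j
  rw [hij, hfw j j, if_pos rfl] at this
  by_contra hne
  rw [if_neg hne] at this
  exact one_ne_zero this

/-- The polarization of the paper's `|α|² = ∑ⱼ (ωⱼ, α)²`. -/
noncomputable def fundamentalForm (fw : I → V) : LinearMap.BilinForm ℝ V :=
  LinearMap.BilinForm.sumSq fun j => innerₗ V (fw j)

theorem isSymm_fundamentalForm : (fundamentalForm fw).IsSymm :=
  LinearMap.BilinForm.isSymm_sumSq _

theorem fundamentalForm_apply (u v : V) :
    fundamentalForm fw u v = ∑ j, ⟪fw j, u⟫_ℝ * ⟪fw j, v⟫_ℝ :=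
  LinearMap.BilinForm.sumSq_apply _ u v

theorem fundamentalForm_apply_sub (ν β : V) :
    fundamentalForm fw β (β - ν) = ∑ j, ⟪fw j, β⟫_ℝ ^ 2 - ∑ j, ⟪fw j, ν⟫_ℝ * ⟪fw j, β⟫_ℝ := by
  rw [fundamentalForm_apply, ← Finset.sum_sub_distrib]
  refine Finset.sum_congr rfl fun j _ => ?_
  rw [inner_sub_right]
  ring

theorem IsFundamental.fundamentalForm_map_map (hfw : R.IsFundamental fw)
    {w : V ≃ₗᵢ[ℝ] V} {bar : I → I} (hw : ∀ v, w (w v) = v)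
    (hwω : ∀ i, w (fw i) = -(fw (bar i))) (u v : V) :
    fundamentalForm fw (w u) (w v) = fundamentalForm fw u v := by
  have hbar : Function.Involutive bar := fun i => hfw.injective <| calc
    fw (bar (bar i)) = -w (fw (bar i)) := by rw [hwω, neg_neg]
    _ = fw i := by rw [← neg_neg (fw (bar i)), ← hwω, map_neg, neg_neg, hw]
  refine LinearMap.BilinForm.sumSq_map_map hbar.toPerm (fun j v => ?_) u v
  simp only [innerₗ_apply_apply, Function.Involutive.coe_toPerm,
    ← LinearIsometryEquiv.inner_map_left_of_involutive hw, hwω, inner_neg_left]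

end RootSystemData

theorem stmt11_general {V : Type*} [NormedAddCommGroup V] [InnerProductSpace ℝ V]
    {I : Type*} [Fintype I] (R : RootSystemData V I)
    (h : ℕ)
    (fw : I → V) (hfw : R.IsFundamental fw)
    (lam : V)
    (w : V ≃ₗᵢ[ℝ] V) (bar : I → I)
    (hw2 : ∀ v, w (w v) = v)
    (hwω : ∀ i, w (fw i) = -(fw (bar i)))
    (C : ℝ) (x : V → ℝ)
    (hx : ∀ β, x β = ((h : ℝ) - 1) * (∑ j, ⟪fw j, β⟫_ℝ ^ 2)
        + (1 - (h : ℝ) / 2) * ⟪β, β⟫_ℝ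
        + ((h : ℝ) - 2) * ⟪lam, β⟫_ℝ
        + (1 - (h : ℝ)) * (∑ j, ⟪fw j, lam - w lam⟫_ℝ * ⟪fw j, β⟫_ℝ)
        + C) :
    ∀ α ∈ Submodule.span ℤ (Set.range R.simple), x ((lam - w lam) + w α) = x α := by
  intro α _
  have hx' : ∀ β, x β = ((h : ℝ) - 1) * RootSystemData.fundamentalForm fw β (β - (lam - w lam))
      + (1 - (h : ℝ) / 2) * (⟪β, β - (lam - w lam)⟫_ℝ - ⟪lam + w lam, β⟫_ℝ) + C := by
    intro β
    rw [hx, RootSystemData.fundamentalForm_apply_sub, real_inner_sub_sub_inner_add]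
    ring
  have hν := w.map_sub_map_self_of_involutive hw2 lam
  rw [hx', hx', LinearMap.BilinForm.apply_sub_eq_of_map_eq_neg RootSystemData.isSymm_fundamentalForm
      (hfw.fundamentalForm_map_map hw2 hwω) hν,
    w.inner_add_map_sub_eq_of_map_eq_neg hν, w.inner_add_map_self_sub_add_map hw2]

/-- the quadratic normalization map
`x(α) = (h−1)|α|² + (1 − h/2)(α,α) + (h−2)(λ,α) + (1−h)∑_j k_j (ω_j,α) + C`
(with `ν = λ − w₀λ = ∑ k_j α_j`) satisfies `x(w₀*α) = x(α)` for all `α` in the root lattice,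
where `w₀*α = ν + w₀(α)`. -/
theorem stmt11 {V : Type*} [NormedAddCommGroup V] [InnerProductSpace ℝ V]
    {I : Type*} [Fintype I] (R : RootSystemData V I)
    (hSL : R.IsSimplyLaced) (hirr : R.IsIrreducible)
    (h : ℕ) (hcox : R.HasCoxeterNumber h)
    (fw : I → V) (hfw : R.IsFundamental fw)
    (lam : V) (hdom : ∀ i, 0 ≤ ⟪lam, R.simple i⟫_ℝ)
    (w : V ≃ₗᵢ[ℝ] V) (bar : I → I)
    (hw2 : ∀ v, w (w v) = v)
    (hwα : ∀ i, w (R.simple i) = -(R.simple (bar i)))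
    (hwω : ∀ i, w (fw i) = -(fw (bar i)))
    (C : ℝ) (x : V → ℝ)
    (hx : ∀ β, x β = ((h : ℝ) - 1) * (∑ j, ⟪fw j, β⟫_ℝ ^ 2)
        + (1 - (h : ℝ) / 2) * ⟪β, β⟫_ℝ
        + ((h : ℝ) - 2) * ⟪lam, β⟫_ℝ
        + (1 - (h : ℝ)) * (∑ j, ⟪fw j, lam - w lam⟫_ℝ * ⟪fw j, β⟫_ℝ)
        + C) :
    ∀ α ∈ Submodule.span ℤ (Set.range R.simple), x ((lam - w lam) + w α) = x α :=
  stmt11_general R h fw hfw lam w bar hw2 hwω C x hx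
end
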